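/- arXiv:2605.28529 — 7 statements merged into one kernel-verified Lean document; each statement's English description precedes it below -/
import Mathlib

section
/- For the unanimity game u_T with T nonempty, the Shapley interaction index satisfies SI^{u_T}(S) = 1/(|T|-|S|+1) if S ⊆ T, and SI^{u_T}(S) = 0 otherwise. -/
open Finset

noncomputable section
open scoped Classical

namespace TUGame

variable {ι : Type*} [Fintype ι] [DecidableEq ι]

/-- Harsanyi dividend of coalition `T` in game `v`. -/
def dividend (v : Finset ι → ℝ) (T : Finset ι) : ℝ :=
  ∑ R ∈ T.powerset, (-1 : ℝ) ^ (T.card - R.card) * v R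

/-- Unanimity game of coalition `T`. -/
def unanimity (T S : Finset ι) : ℝ := if T ⊆ S then 1 else 0

/-- Shapley value of player `i` in game `v`. -/
def shapley (v : Finset ι → ℝ) (i : ι) : ℝ :=
  ∑ S ∈ Finset.univ.powerset.filter (fun S => i ∈ S),
    (((S.card - 1).factorial * (Fintype.card ι - S.card).factorial : ℕ) : ℝ) /
      (((Fintype.card ι).factorial : ℕ) : ℝ) * (v S - v (S.erase i))

/-- Shapley interaction index, defined via discrete derivatives. -/
def SIderiv (v : Finset ι → ℝ) (S : Finset ι) : ℝ :=
  ∑ T ∈ (Finset.univ \ S).powerset,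
    (((Fintype.card ι - T.card - S.card).factorial * T.card.factorial : ℕ) : ℝ) /
      (((Fintype.card ι - S.card + 1).factorial : ℕ) : ℝ) *
    ∑ L ∈ S.powerset, (-1 : ℝ) ^ (S.card - L.card) * v (T ∪ L)

/-- Shapley interaction index, expressed via Harsanyi dividends. -/
def SIdiv (v : Finset ι → ℝ) (S : Finset ι) : ℝ :=
  ∑ T ∈ Finset.univ.powerset.filter (fun T => S ⊆ T),
    dividend v T / ((T.card - S.card + 1 : ℕ) : ℝ)

/-- The subgraph of `G` induced by the coalition `S` (as a graph on the same vertex set). -/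
def restrict (G : SimpleGraph ι) (S : Finset ι) : SimpleGraph ι where
  Adj i j := G.Adj i j ∧ i ∈ S ∧ j ∈ S
  symm := ⟨fun i j h => ⟨h.1.symm, h.2.2, h.2.1⟩⟩
  loopless := ⟨fun i h => G.loopless.irrefl i h.1⟩

/-- Connected component of `i` in the subgraph induced by `S`. -/
def comp (G : SimpleGraph ι) (S : Finset ι) (i : ι) : Finset ι :=
  S.filter fun j => (restrict G S).Reachable i j

/-- Connected component of `i` in `G`. -/
def component (G : SimpleGraph ι) (i : ι) : Finset ι := comp G Finset.univ i

/-- Myerson graph-restricted game: sum of `v` over the connected components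
of the subgraph induced by `S`. -/
def restrictedGame (G : SimpleGraph ι) (v : Finset ι → ℝ) (S : Finset ι) : ℝ :=
  ∑ C ∈ S.image (comp G S), v C

/-- Myerson interaction index. -/
def MI (G : SimpleGraph ι) (v : Finset ι → ℝ) (S : Finset ι) : ℝ :=
  SIdiv (restrictedGame G v) S

/-- The subgraph induced by `S` is connected. -/
def ConnectedOn (G : SimpleGraph ι) (S : Finset ι) : Prop :=
  ∀ i ∈ S, ∀ j ∈ S, (restrict G S).Reachable i j

/-- `R` is a minimal `T`-connecting set of nodes in `G`. -/
def MinimalConnecting (G : SimpleGraph ι) (T R : Finset ι) : Prop :=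
  T ⊆ R ∧ ConnectedOn G R ∧ ∀ R' ⊂ R, ¬ (T ⊆ R' ∧ ConnectedOn G R')

/-- `i` is an intermediary of `T` in `G`. -/
def Intermediary (G : SimpleGraph ι) (T : Finset ι) (i : ι) : Prop :=
  ∃ R, MinimalConnecting G T R ∧ i ∈ R ∧ i ∉ T

/-- `i` is an essential intermediary of `T` in `G`. -/
def EssentialIntermediary (G : SimpleGraph ι) (T : Finset ι) (i : ι) : Prop :=
  i ∉ T ∧ ∀ R, MinimalConnecting G T R → i ∈ R

/-- `i` is a null player in game `v`. -/
def NullPlayer (v : Finset ι → ℝ) (i : ι) : Prop :=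
  ∀ S : Finset ι, i ∉ S → v (insert i S) = v S

/-- `i` is a graph null player in the communication situation `(N, v, G)`. -/
def GraphNull (G : SimpleGraph ι) (v : Finset ι → ℝ) (i : ι) : Prop :=
  NullPlayer v i ∧
    ∀ j k : ι, j ≠ k → j ≠ i → k ≠ i → Intermediary G {j, k} i →
      NullPlayer v j ∨ NullPlayer v k

/-- `P` is a veto partnership in game `v`. -/
def VetoPartnership (v : Finset ι → ℝ) (P : Finset ι) : Prop :=
  P.Nonempty ∧ ∀ T : Finset ι, T ⊆ Finset.univ \ P →
    v T = 0 ∧ ∀ S ⊂ P, v (T ∪ S) = 0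

/-- `GP` is a veto graph partnership in `(N, v, G)`. -/
def VetoGraphPartnership (G : SimpleGraph ι) (v : Finset ι → ℝ) (GP : Finset ι) : Prop :=
  GP.Nonempty ∧ ∃ P, VetoPartnership v P ∧
    ∀ i ∈ GP, i ∈ P ∨ EssentialIntermediary G P i

/-- Cutnodes of `S`: nodes of `S` whose removal disconnects the induced subgraph on `S`. -/
def cutnodes (G : SimpleGraph ι) (S : Finset ι) : Finset ι :=
  S.filter fun i => ¬ ConnectedOn G (S.erase i)

end TUGame

open TUGame

/-!
For `T'` disjoint from `S`, the `S`-derivative of `u_T` at `T'` is `[T \ S ⊆ T']` times the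
alternating sum of `(-1) ^ |S \ L|` over the interval `[T ∩ S, S]` of the Boolean lattice, which
is `0^|S \ T|`. So only `S ⊆ T` contributes, and then the index is the total Shapley weight
`(m - |T'|)! |T'|! / (m + 1)!`, `m = n - s`, of the interval `[T \ S, N \ S]`. Grouping its
members by cardinality turns this into the hockey-stick identity, with value `1 / (|T \ S| + 1)`.
-/

open Nat

namespace Nat

theorem choose_mul_factorial_mul_factorial_eq_add_choose {a d m : ℕ} (hm : m ≤ d) :
    d.choose m * ((d - m)! * (a + m)!) = d ! * a ! * (m + a).choose a := by
  refine Nat.eq_of_mul_eq_mul_right m.factorial_pos ?_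
  calc d.choose m * ((d - m)! * (a + m)!) * m !
      = d.choose m * m ! * (d - m)! * (a + m)! := by ring
    _ = d ! * ((m + a).choose a * m ! * a !) := by
      rw [choose_mul_factorial_mul_factorial hm, add_choose_mul_factorial_mul_factorial, add_comm]
    _ = d ! * a ! * (m + a).choose a * m ! := by ring

theorem succ_mul_sum_choose_mul_factorial_mul_factorial (a d : ℕ) :
    (a + 1) * ∑ m ∈ range (d + 1), d.choose m * ((d - m)! * (a + m)!) = (a + d + 1)! := by
  rw [sum_congr rfl fun m hm =>
      choose_mul_factorial_mul_factorial_eq_add_choose (mem_range_succ_iff.mp hm),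
    ← mul_sum, sum_range_add_choose]
  calc (a + 1) * (d ! * a ! * (d + a + 1).choose (a + 1))
      = (a + d + 1).choose (a + 1) * (a + 1)! * (a + d + 1 - (a + 1))! := by
        rw [show a + d + 1 - (a + 1) = d by omega, show d + a + 1 = a + d + 1 by ring,
          factorial_succ]
        ring
    _ = (a + d + 1)! := choose_mul_factorial_mul_factorial (by omega)

end Nat

namespace Finset

variable {α : Type*} [DecidableEq α]

theorem sum_Icc_apply_card {M : Type*} [AddCommMonoid M] (f : ℕ → M) {A S : Finset α}
    (h : A ⊆ S) :
    ∑ L ∈ Icc A S, f #L = ∑ m ∈ range (#S - #A + 1), (#S - #A).choose m • f (#A + m) := by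
  have hdisj : ∀ L ∈ (S \ A).powerset, Disjoint A L := fun L hL =>
    disjoint_of_subset_right (mem_powerset.mp hL) disjoint_sdiff
  rw [Icc_eq_image_powerset h, sum_image fun L hL L' hL' hLL' => by
      rw [← union_sdiff_cancel_left (hdisj L hL), hLL', union_sdiff_cancel_left (hdisj L' hL')],
    sum_congr rfl fun L hL => by rw [card_union_of_disjoint (hdisj L hL)],
    sum_powerset_apply_card (fun k => f (#A + k)), card_sdiff_of_subset h]

theorem sum_Icc_neg_one_pow_card_sub {R : Type*} [CommRing R] {A S : Finset α} (h : A ⊆ S) :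
    ∑ L ∈ Icc A S, (-1 : R) ^ (#S - #L) = if A = S then 1 else 0 := by
  rw [sum_Icc_apply_card (fun k => (-1 : R) ^ (#S - k)) h]
  calc ∑ m ∈ range (#S - #A + 1), (#S - #A).choose m • (-1 : R) ^ (#S - (#A + m))
      = (1 + -1 : R) ^ (#S - #A) := by
        rw [add_pow]
        refine sum_congr rfl fun m _ => ?_
        rw [nsmul_eq_mul, one_pow, one_mul, Nat.sub_add_eq, mul_comm]
    _ = if A = S then 1 else 0 := by
        have hcard : #S ≤ #A ↔ A = S :=
          ⟨fun hle => eq_of_subset_of_card_le h hle, fun hAS => hAS ▸ le_rfl⟩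
        simp only [add_neg_cancel, zero_pow_eq, Nat.sub_eq_zero_iff_le, hcard]

theorem succ_card_mul_sum_Icc_factorial_mul_factorial {A U : Finset α} (h : A ⊆ U) :
    (#A + 1) * ∑ T ∈ Icc A U, (#U - #T)! * (#T)! = (#U + 1)! := by
  have hU : #U = #A + (#U - #A) := (Nat.add_sub_cancel' (card_le_card h)).symm
  rw [sum_Icc_apply_card (fun k => (#U - k)! * k !) h]
  simp only [smul_eq_mul, Nat.sub_add_eq]
  rw [Nat.succ_mul_sum_choose_mul_factorial_mul_factorial, ← hU]

theorem sum_Icc_factorial_mul_factorial_div {A U : Finset α} (h : A ⊆ U) :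
    ∑ T ∈ Icc A U, (((#U - #T)! * (#T)! : ℕ) : ℝ) / ((#U + 1)! : ℕ) = 1 / ((#A + 1 : ℕ) : ℝ) := by
  rw [← sum_div, ← Nat.cast_sum, ← succ_card_mul_sum_Icc_factorial_mul_factorial h, Nat.cast_mul]
  have : ((#A + 1 : ℕ) : ℝ) ≠ 0 := by positivity
  field_simp

theorem subset_union_iff_of_disjoint_of_subset {T T' L S : Finset α} (hT' : Disjoint T' S)
    (hL : L ⊆ S) : T ⊆ T' ∪ L ↔ T \ S ⊆ T' ∧ T ∩ S ⊆ L := by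
  simp only [subset_iff, mem_union, mem_sdiff, mem_inter]
  grind [disjoint_left]

end Finset

namespace TUGame

variable {ι : Type*} [DecidableEq ι]

/-- The `S`-derivative `δ_S^v(T)`; `SIderiv v S` is its weighted sum over `T ⊆ N \ S`. -/
def derivative (v : Finset ι → ℝ) (S T : Finset ι) : ℝ :=
  ∑ L ∈ S.powerset, (-1 : ℝ) ^ (S.card - L.card) * v (T ∪ L)

theorem derivative_unanimity (T : Finset ι) {S T' : Finset ι} (h : Disjoint T' S) :
    derivative (unanimity T) S T' = if S ⊆ T ∧ T \ S ⊆ T' then 1 else 0 := by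
  calc derivative (unanimity T) S T'
      = ∑ L ∈ S.powerset, if T \ S ⊆ T' ∧ T ∩ S ⊆ L then (-1 : ℝ) ^ (#S - #L) else 0 := by
        refine sum_congr rfl fun L hL => ?_
        simp only [unanimity, subset_union_iff_of_disjoint_of_subset h (mem_powerset.mp hL),
          mul_ite, mul_one, mul_zero]
    _ = if T \ S ⊆ T' then ∑ L ∈ Icc (T ∩ S) S, (-1 : ℝ) ^ (#S - #L) else 0 := by
        rw [Icc_eq_filter_powerset, sum_filter]
        split_ifs with hT' <;> simp [hT']
    _ = if S ⊆ T ∧ T \ S ⊆ T' then 1 else 0 := by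
        simp only [sum_Icc_neg_one_pow_card_sub inter_subset_right, inter_eq_right]
        split_ifs <;> tauto

end TUGame

theorem SI_unanimity_general {ι : Type*} [Fintype ι] [DecidableEq ι]
    (T S : Finset ι) :
    SIderiv (unanimity T) S =
      if S ⊆ T then (1 : ℝ) / ((T.card - S.card + 1 : ℕ) : ℝ) else 0 := by
  have hderiv (T' : Finset ι) (hT' : T' ∈ (univ \ S).powerset) :
      derivative (unanimity T) S T' = if S ⊆ T ∧ T \ S ⊆ T' then 1 else 0 :=
    derivative_unanimity T (disjoint_of_subset_left (mem_powerset.mp hT') sdiff_disjoint)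
  change ∑ T' ∈ (univ \ S).powerset, _ * derivative (unanimity T) S T' = _
  rw [sum_congr rfl fun T' hT' => by rw [hderiv T' hT']]
  split_ifs with hST
  · simp only [hST, true_and, mul_ite, mul_one, mul_zero]
    rw [← sum_filter, ← Icc_eq_filter_powerset, ← card_sdiff_of_subset hST]
    have hcard : Fintype.card ι - #S = #(univ \ S) := (card_univ_sdiff S).symm
    simp only [Nat.sub_right_comm (Fintype.card ι) _ #S, hcard]
    exact sum_Icc_factorial_mul_factorial_div (sdiff_subset_sdiff (subset_univ T) subset_rfl)
  · simp [hST]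

/-- Shapley interaction index of a unanimity game. -/
theorem SI_unanimity {ι : Type*} [Fintype ι] [DecidableEq ι]
    (T S : Finset ι) (hT : T.Nonempty) (hS : S.Nonempty) :
    SIderiv (unanimity T) S =
      if S ⊆ T then (1 : ℝ) / ((T.card - S.card + 1 : ℕ) : ℝ) else 0 :=
  SI_unanimity_general T S
end
end

section
/- For any TU game v on N and nonempty S ⊆ N, the Shapley interaction index can be expressed in terms of Harsanyi dividends as SI^v(S) = Σ_{T ⊇ S} Δ_v(T)/(|T|-|S|+1). -/
open Finset

noncomputable section
open scoped Classical

open TUGame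

/-! Both sides are linear in `v`, so it suffices to compare the coefficients of each `v Q`.
On the derivative side `Q = T ∪ L` determines `(T, L) = (Q \ S, Q ∩ S)`. On the dividend side
the coefficient is an alternating sum over the supersets of `S ∪ Q`; it depends only on
cardinalities and collapses by the Beta integral
`∑ₖ C(M,k) (-1)^k / (a+k+1) = ∫₀¹ x^a (1-x)^M dx = a! M! / (a+M+1)!`. -/

open scoped Nat

theorem sum_range_choose_mul_neg_one_pow_div {K : Type*} [Field K] [CharZero K] (M a : ℕ) :
    ∑ k ∈ range (M + 1), (M.choose k : K) * ((-1) ^ k / (a + k + 1)) =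
      (a ! * M ! : ℕ) / ((a + M + 1)! : ℕ) := by
  induction M generalizing a with
  | zero =>
    have : (a ! : K) ≠ 0 := Nat.cast_ne_zero.2 a.factorial_ne_zero
    simp [Nat.factorial_succ, div_mul_cancel_right₀ this]
  | succ M ih =>
    have shift : ∑ k ∈ range (M + 1), (M.choose k : K) * ((-1) ^ (k + 1) / (a + (k + 1 : ℕ) + 1))
        = -∑ k ∈ range (M + 1), (M.choose k : K) * ((-1) ^ k / ((a + 1 : ℕ) + k + 1)) := by
      rw [← sum_neg_distrib]
      refine sum_congr rfl fun k _ => ?_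
      push_cast; ring
    rw [sum_choose_succ_mul (fun k _ => (-1) ^ k / (a + k + 1 : K)), shift, ih a, ih (a + 1),
      show a + 1 + M + 1 = a + M + 1 + 1 by ring, show a + (M + 1) + 1 = a + M + 1 + 1 by ring,
      Nat.factorial_succ (a + M + 1), Nat.factorial_succ a, Nat.factorial_succ M]
    have hF : ((a + M + 1)! : K) ≠ 0 := Nat.cast_ne_zero.2 (Nat.factorial_ne_zero _)
    have hD : ((a + M + 1 + 1 : ℕ) : K) ≠ 0 := Nat.cast_ne_zero.2 (Nat.succ_ne_zero _)
    push_cast at hD ⊢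
    field_simp
    ring

theorem Finset.sum_Icc_apply_card_s3 {α M : Type*} [DecidableEq α] [AddCommMonoid M]
    {A B : Finset α} (hAB : A ⊆ B) (f : ℕ → M) :
    ∑ T ∈ Icc A B, f #T = ∑ j ∈ range (#(B \ A) + 1), (#(B \ A)).choose j • f (#A + j) := by
  have hdisj : ∀ K ∈ (B \ A).powerset, Disjoint A K := fun K hK =>
    (subset_sdiff.1 (mem_powerset.1 hK)).2.symm
  have hinj : Set.InjOn (A ∪ ·) (B \ A).powerset := fun K hK L hL hKL => by
    rw [← union_sdiff_cancel_left (hdisj K hK), ← union_sdiff_cancel_left (hdisj L hL)]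
    exact congrArg (· \ A) hKL
  rw [Icc_eq_image_powerset hAB, sum_image hinj, ← sum_powerset_apply_card]
  exact sum_congr rfl fun K hK => by rw [card_union_of_disjoint (hdisj K hK)]

namespace TUGame

variable {ι : Type*} [Fintype ι] [DecidableEq ι]

def SIweight (S Q : Finset ι) : ℝ :=
  (((Fintype.card ι - #(Q \ S) - #S)! * (#(Q \ S))! : ℕ) : ℝ) /
    (((Fintype.card ι - #S + 1)! : ℕ) : ℝ) * (-1) ^ (#S - #(Q ∩ S))

theorem SIderiv_eq_sum_SIweight_mul (v : Finset ι → ℝ) (S : Finset ι) :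
    SIderiv v S = ∑ Q, SIweight S Q * v Q := by
  have split : ∀ p ∈ (univ \ S).powerset ×ˢ S.powerset,
      (p.1 ∪ p.2) \ S = p.1 ∧ (p.1 ∪ p.2) ∩ S = p.2 := by
    rintro ⟨T, L⟩ hp
    simp only [mem_product, mem_powerset, ← compl_eq_univ_sdiff,
      subset_compl_iff_disjoint_right] at hp
    constructor
    · rw [union_sdiff_distrib, hp.1.sdiff_eq_left, sdiff_eq_empty_iff_subset.2 hp.2, union_empty]
    · rw [union_inter_distrib_right, disjoint_iff_inter_eq_empty.1 hp.1, empty_union,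
        inter_eq_left.2 hp.2]
  unfold SIderiv
  simp_rw [mul_sum]
  rw [← sum_product']
  refine sum_nbij' (fun p => p.1 ∪ p.2) (fun Q => (Q \ S, Q ∩ S)) (by simp) ?_ ?_
    (fun Q _ => sdiff_union_inter Q S) ?_
  · intro Q _
    simp [← compl_eq_univ_sdiff, subset_compl_iff_disjoint_right, disjoint_sdiff_self_left]
  · intro p hp
    rw [(split p hp).1, (split p hp).2]
  · intro p hp
    rw [SIweight, (split p hp).1, (split p hp).2]
    ring

theorem sum_Icc_union_neg_one_pow_div_eq_SIweight (S R : Finset ι) :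
    ∑ T ∈ Icc (S ∪ R) univ, (-1 : ℝ) ^ (#T - #R) / ((#T - #S + 1 : ℕ) : ℝ) = SIweight S R := by
  rw [SIweight]
  set a := #(R \ S)
  set M := #(univ \ (S ∪ R))
  have hSR : #(S ∪ R) = #S + a := by rw [union_comm, ← card_sdiff_add_card, add_comm]
  have hR : #(R ∩ S) + a = #R := card_inter_add_card_sdiff R S
  have hRS : #(R ∩ S) ≤ #S := card_le_card inter_subset_right
  have hM : M + #(S ∪ R) = Fintype.card ι := card_sdiff_add_card_eq_card (subset_univ _)
  have hterm : ∀ j, (-1 : ℝ) ^ (#(S ∪ R) + j - #R) / ((#(S ∪ R) + j - #S + 1 : ℕ) : ℝ) =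
      (-1) ^ (#S - #(R ∩ S)) * ((-1) ^ j / (a + j + 1)) := fun j => by
    rw [show #(S ∪ R) + j - #R = (#S - #(R ∩ S)) + j by omega,
      show #(S ∪ R) + j - #S + 1 = a + j + 1 by omega, pow_add]
    push_cast
    ring
  rw [sum_Icc_apply_card_s3 (subset_univ _) (fun t => (-1 : ℝ) ^ (t - #R) / ((t - #S + 1 : ℕ) : ℝ))]
  simp_rw [hterm, nsmul_eq_mul, mul_left_comm _ ((-1 : ℝ) ^ (#S - #(R ∩ S))), ← mul_sum,
    sum_range_choose_mul_neg_one_pow_div]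
  rw [show Fintype.card ι - a - #S = M by omega, show Fintype.card ι - #S + 1 = a + M + 1 by omega]
  push_cast
  ring

theorem SIdiv_eq_sum_SIweight_mul (v : Finset ι → ℝ) (S : Finset ι) :
    SIdiv v S = ∑ Q, SIweight S Q * v Q := by
  unfold SIdiv dividend
  simp_rw [sum_div]
  rw [sum_comm' (t' := univ) (s' := fun R => Icc (S ∪ R) univ) (by
    intro T R
    simp only [mem_filter, mem_powerset, mem_Icc, union_subset_iff, mem_univ, subset_univ]
    tauto)]
  refine sum_congr rfl fun R _ => ?_
  rw [← sum_Icc_union_neg_one_pow_div_eq_SIweight, sum_mul]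
  exact sum_congr rfl fun T _ => by ring

end TUGame

theorem SI_eq_dividend_form_general {ι : Type*} [Fintype ι] [DecidableEq ι]
    (v : Finset ι → ℝ) (S : Finset ι) :
    SIderiv v S = SIdiv v S := by
  rw [SIderiv_eq_sum_SIweight_mul, SIdiv_eq_sum_SIweight_mul]

/-- the Shapley interaction index in terms of Harsanyi dividends. -/
theorem SI_eq_dividend_form {ι : Type*} [Fintype ι] [DecidableEq ι]
    (v : Finset ι → ℝ) (S : Finset ι) (hS : S.Nonempty) :
    SIderiv v S = SIdiv v S :=
  SI_eq_dividend_form_general v S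
end
end

section
/- For a communication situation (N, v, Γ) and a coalition S ⊆ N that is not contained in any single connected component of the graph Γ, the Harsanyi dividend of S in the graph-restricted game vanishes: Δ_{v^Γ}(S) = 0. -/
open Finset

noncomputable section
open scoped Classical

/-! If `S` meets a component `C` of the graph and its complement, then, since no edge leaves `C`,
`v^Γ(R) = v^Γ(R ∩ C) + v^Γ(R \ C)` for every `R`. A player of `S` outside `C` is null for the
first summand and a player of `S` inside `C` for the second, and dividends vanish on coalitions
containing a null player. -/

namespace TUGame

section Dividend

variable {ι : Type*}

theorem dividend_add (u w : Finset ι → ℝ) (S : Finset ι) :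
    dividend (fun R => u R + w R) S = dividend u S + dividend w S := by
  simp only [dividend, mul_add, sum_add_distrib]

variable [DecidableEq ι]

theorem dividend_insert (u : Finset ι → ℝ) {x : ι} {T : Finset ι} (hx : x ∉ T) :
    dividend u (insert x T) = dividend (fun R => u (insert x R) - u R) T := by
  rw [dividend, sum_powerset_insert hx, dividend, ← sum_add_distrib]
  refine sum_congr rfl fun R hR => ?_
  have hRT : R.card ≤ T.card := card_le_card (mem_powerset.mp hR)
  have hxR : x ∉ R := fun h => hx (mem_powerset.mp hR h)
  rw [card_insert_of_notMem hx, card_insert_of_notMem hxR,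
    Nat.add_sub_add_right, Nat.sub_add_comm hRT, pow_succ]
  ring

theorem dividend_eq_zero_of_nullPlayer {u : Finset ι → ℝ} {x : ι} (hx : NullPlayer u x)
    {S : Finset ι} (hxS : x ∈ S) : dividend u S = 0 := by
  rw [← insert_erase hxS, dividend_insert u (notMem_erase x S), dividend]
  refine sum_eq_zero fun R hR => ?_
  rw [hx R fun h => notMem_erase x S (mem_powerset.mp hR h), sub_self, mul_zero]

theorem dividend_eq_zero_of_additive_split {w : Finset ι → ℝ} {C S : Finset ι}
    (hw : ∀ R, w R = w (R ∩ C) + w (R \ C)) {x y : ι} (hxS : x ∈ S) (hxC : x ∈ C)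
    (hyS : y ∈ S) (hyC : y ∉ C) : dividend w S = 0 := by
  have hnull_inter : NullPlayer (fun R => w (R ∩ C)) y := fun R _ => by
    simp only [insert_inter_of_notMem hyC]
  have hnull_sdiff : NullPlayer (fun R => w (R \ C)) x := fun R _ => by
    simp only [insert_sdiff_of_mem R hxC]
  rw [funext hw, dividend_add, dividend_eq_zero_of_nullPlayer hnull_inter hyS,
    dividend_eq_zero_of_nullPlayer hnull_sdiff hxS, add_zero]

end Dividend

section Graph

variable {ι : Type*} [Fintype ι]

theorem restrict_univ (G : SimpleGraph ι) : restrict G univ = G := by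
  ext
  simp [restrict]

variable [DecidableEq ι] {G : SimpleGraph ι}

theorem mem_component {i j : ι} : j ∈ component G i ↔ G.Reachable i j := by
  simp [component, comp, restrict_univ]

theorem mem_component_of_adj {i j k : ι} (hjk : G.Adj j k) (hj : j ∈ component G i) :
    k ∈ component G i :=
  mem_component.mpr ((mem_component.mp hj).trans hjk.reachable)

theorem mem_comp_self {R : Finset ι} {j : ι} (hj : j ∈ R) : j ∈ comp G R j :=
  mem_filter.mpr ⟨hj, SimpleGraph.Reachable.refl j⟩

theorem comp_subset (G : SimpleGraph ι) (R : Finset ι) (j : ι) : comp G R j ⊆ R :=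
  filter_subset _ _

theorem comp_eq_comp_inter {C : Finset ι} (hC : ∀ j k, G.Adj j k → j ∈ C → k ∈ C)
    {R : Finset ι} {j : ι} (hj : j ∈ R ∩ C) : comp G R j = comp G (R ∩ C) j := by
  have hmono : restrict G (R ∩ C) ≤ restrict G R := fun a b hab =>
    ⟨hab.1, mem_of_mem_inter_left hab.2.1, mem_of_mem_inter_left hab.2.2⟩
  have hstay : ∀ k, (restrict G R).Reachable j k →
      k ∈ R ∩ C ∧ (restrict G (R ∩ C)).Reachable j k := by
    intro k hk
    rw [SimpleGraph.reachable_iff_reflTransGen] at hk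
    induction hk with
    | refl => exact ⟨hj, SimpleGraph.Reachable.refl j⟩
    | tail _ hab ih =>
      have hb : _ ∈ R ∩ C := mem_inter.mpr ⟨hab.2.2, hC _ _ hab.1 (mem_inter.mp ih.1).2⟩
      exact ⟨hb, ih.2.trans (SimpleGraph.Adj.reachable ⟨hab.1, ih.1, hb⟩)⟩
  ext k
  simp only [comp, mem_filter]
  exact ⟨fun hk => hstay k hk.2, fun hk => ⟨mem_of_mem_inter_left hk.1, hk.2.mono hmono⟩⟩

theorem restrictedGame_eq_add {C : Finset ι} (hC : ∀ j k, G.Adj j k → j ∈ C → k ∈ C)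
    (v : Finset ι → ℝ) (R : Finset ι) :
    restrictedGame G v R = restrictedGame G v (R ∩ C) + restrictedGame G v (R \ C) := by
  have hCc : ∀ j k, G.Adj j k → j ∈ Cᶜ → k ∈ Cᶜ := fun j k hjk hj =>
    mem_compl.mpr fun hk => mem_compl.mp hj (hC k j hjk.symm hk)
  have himage : R.image (comp G R)
      = (R ∩ C).image (comp G (R ∩ C)) ∪ (R \ C).image (comp G (R \ C)) := by
    rw [sdiff_eq_inter_compl,
      ← image_congr fun j hj => comp_eq_comp_inter hC hj,
      ← image_congr fun j hj => comp_eq_comp_inter hCc hj,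
      ← image_union, ← inter_union_distrib_left, union_compl, inter_univ]
  have hdisj : Disjoint ((R ∩ C).image (comp G (R ∩ C))) ((R \ C).image (comp G (R \ C))) := by
    simp only [disjoint_left, mem_image]
    rintro _ ⟨j, hj, rfl⟩ ⟨k, -, hk⟩
    have hjk : j ∈ R \ C := comp_subset G _ k (hk ▸ mem_comp_self hj)
    exact (mem_sdiff.mp hjk).2 (mem_inter.mp hj).2
  rw [restrictedGame, himage, sum_union hdisj, restrictedGame, restrictedGame]

end Graph

end TUGame

open TUGame

/-- the Harsanyi dividend of a coalition not contained in a single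
connected component of the graph vanishes in the graph-restricted game. -/
theorem dividend_restrictedGame_of_disconnected {ι : Type*} [Fintype ι] [DecidableEq ι]
    (G : SimpleGraph ι) (v : Finset ι → ℝ) (S : Finset ι)
    (h : ¬ ∃ i : ι, S ⊆ component G i) :
    dividend (restrictedGame G v) S = 0 := by
  rcases S.eq_empty_or_nonempty with rfl | ⟨i, hiS⟩
  · simp [dividend, restrictedGame]
  obtain ⟨j, hjS, hj⟩ := not_subset.mp fun hS => h ⟨i, hS⟩
  exact dividend_eq_zero_of_additive_split
    (restrictedGame_eq_add (fun _ _ => mem_component_of_adj) v) hiS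
    (mem_component.mpr (SimpleGraph.Reachable.refl i)) hjS hj
end
end

section
/- If Γ is a tree on N, then for any connected coalition S the dividends of the graph-restricted game satisfy Δ_{v^Γ}(S) = Σ_{L ⊆ C(S)} Δ_v(S∖L), where C(S) is the set of cutnodes of S, i.e., nodes of S whose removal disconnects the induced subgraph on S. -/
open Finset

noncomputable section
open scoped Classical

open TUGame

/-!
Expanding `dividend (restrictedGame G v) S` and exchanging sums, the coefficient of `v T` is the
alternating sum over those `R ⊆ S` of which `T` is a component, i.e. `T ⊆ R ⊆ S \ B` with `B`
the neighbours of `T` in `S \ T`. It vanishes unless `T` is nonempty, connected and dominates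
`S` (`T = S \ B`), and is then `(-1) ^ #(S \ T)`. The right-hand side expands to the same sum
with the condition `cutnodes G S ⊆ T` instead, and `v ∅ = 0` disposes of `T = ∅`. For nonempty
`T` the two conditions agree: removing a node outside a connected dominating `T` leaves `S`
connected, and in a forest a node whose removal leaves `S` connected has at most one neighbour
in `S`, so it cannot be an interior node of a path inside `S`; hence if all cut nodes lie in
`T`, paths in `S` between nodes of `T` stay in `T`, and the second node of a path from `j ∉ T`
into `T` lies in `T`.
-/

namespace SimpleGraph.Walk

variable {V : Type*} {H : SimpleGraph V}

lemma IsPath.neighborSet_nontrivial {a b x : V} {p : H.Walk a b} (hp : p.IsPath)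
    (hx : x ∈ p.support) (hxa : x ≠ a) (hxb : x ≠ b) : (H.neighborSet x).Nontrivial := by
  obtain ⟨n, rfl, hn⟩ := mem_support_iff_exists_getVert.mp hx
  have hn0 : n ≠ 0 := by rintro rfl; simp at hxa
  have hnl : n < p.length := lt_of_le_of_ne hn (by rintro rfl; simp at hxb)
  have hsub : p.toSubgraph.neighborSet (p.getVert n) ⊆ H.neighborSet (p.getVert n) :=
    fun y hy => p.toSubgraph.adj_sub hy
  refine Set.Nontrivial.mono ?_ hsub
  rw [hp.neighborSet_toSubgraph_internal hn0 hnl]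
  refine Set.nontrivial_pair fun h => ?_
  have := hp.getVert_injOn (by rw [Set.mem_ofPred_eq]; lia) (by rw [Set.mem_ofPred_eq]; lia) h
  lia

end SimpleGraph.Walk

namespace Finset

variable {α A : Type*} [DecidableEq α] [Ring A] {S T U L : Finset α}

lemma sum_powerset_neg_one_pow_card_eq_ite (X : Finset α) :
    ∑ Y ∈ X.powerset, (-1 : A) ^ #Y = if X = ∅ then 1 else 0 := by
  have h := congrArg (Int.cast : ℤ → A) (sum_powerset_neg_one_pow_card (x := X))
  push_cast at h
  exact h

lemma neg_one_pow_card_sdiff (h : L ⊆ S) : (-1 : A) ^ #(S \ L) = (-1) ^ #S * (-1) ^ #L := by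
  rw [← card_sdiff_add_card_eq_card h, pow_add, mul_assoc, ← pow_add, Even.neg_one_pow ⟨_, rfl⟩,
    mul_one]

lemma sum_superset_neg_one_pow_card_sdiff (hTU : T ⊆ U) (hUS : U ⊆ S) :
    ∑ R ∈ {R ∈ U.powerset | T ⊆ R}, (-1 : A) ^ #(S \ R) =
      if T = U then (-1) ^ #(S \ U) else 0 := by
  have hreindex : ∑ R ∈ {R ∈ U.powerset | T ⊆ R}, (-1 : A) ^ #(S \ R) =
      ∑ X ∈ (U \ T).powerset, (-1) ^ #(S \ U) * (-1) ^ #X := by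
    refine sum_nbij' (U \ ·) (U \ ·) (fun R hR => ?_) (fun X hX => ?_) (fun R hR => ?_)
      (fun X hX => ?_) (fun R hR => ?_) <;>
      simp only [mem_powerset, mem_filter] at *
    · exact sdiff_subset_sdiff subset_rfl hR.2
    · exact ⟨sdiff_subset, subset_sdiff.mpr ⟨hTU, (subset_sdiff.mp hX).2.symm⟩⟩
    · exact sdiff_sdiff_eq_self hR.1
    · exact sdiff_sdiff_eq_self (hX.trans sdiff_subset)
    · rw [← pow_add, card_sdiff_of_subset (hR.1.trans hUS), card_sdiff_of_subset hUS,
        card_sdiff_of_subset hR.1]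
      have := card_le_card hR.1
      have := card_le_card hUS
      congr 1
      omega
  rw [hreindex, ← mul_sum, sum_powerset_neg_one_pow_card_eq_ite]
  have hiff : U \ T = ∅ ↔ T = U := by
    rw [sdiff_eq_empty_iff_subset, Subset.antisymm_iff]
    exact ⟨fun h => ⟨hTU, h⟩, And.right⟩
  simp only [hiff, mul_ite, mul_one, mul_zero]

end Finset

namespace TUGame

variable {ι : Type*} {G : SimpleGraph ι} {S T U C : Finset ι}

lemma restrict_le (G : SimpleGraph ι) (S : Finset ι) : restrict G S ≤ G := fun _ _ h => h.1

lemma restrict_mono (G : SimpleGraph ι) (h : S ⊆ T) : restrict G S ≤ restrict G T :=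
  fun _ _ hadj => ⟨hadj.1, h hadj.2.1, h hadj.2.2⟩

lemma mem_of_mem_support_restrict {a b : ι} (p : (restrict G S).Walk a b) (ha : a ∈ S) :
    ∀ x ∈ p.support, x ∈ S := by
  induction p with
  | nil => simpa using ha
  | cons h q ih => simpa [ha] using ih h.2.2

lemma reachable_restrict_of_support_subset {a b : ι} (p : (restrict G S).Walk a b)
    (h : ∀ x ∈ p.support, x ∈ T) : (restrict G T).Reachable a b := by
  induction p with
  | nil => rfl
  | cons hadj q ih =>
    simp only [SimpleGraph.Walk.support_cons, List.mem_cons, forall_eq_or_imp] at h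
    have hadj' : (restrict G T).Adj _ _ := ⟨hadj.1, h.1, h.2 _ q.start_mem_support⟩
    exact hadj'.reachable.trans (ih h.2)

lemma exists_isPath_of_reachable_restrict {a b : ι} (h : (restrict G S).Reachable a b)
    (ha : a ∈ S) : ∃ p : G.Walk a b, p.IsPath ∧ ∀ x ∈ p.support, x ∈ S := by
  obtain ⟨w⟩ := h
  let q := w.mapLe (restrict_le G S)
  refine ⟨q.toPath, q.toPath.2, fun x hx => ?_⟩
  have hx' : x ∈ q.support := q.support_toPath_subset_support hx
  rw [SimpleGraph.Walk.support_mapLe_eq_support] at hx'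
  exact mem_of_mem_support_restrict w ha x hx'

lemma connectedOn_of_forall_adj (hTU : T ⊆ U) (hT : ConnectedOn G T)
    (hdom : ∀ j ∈ U, j ∉ T → ∃ t ∈ T, G.Adj t j) : ConnectedOn G U := by
  have reach : ∀ j ∈ U, ∃ t ∈ T, (restrict G U).Reachable j t := by
    intro j hj
    by_cases hjT : j ∈ T
    · exact ⟨j, hjT, .rfl⟩
    obtain ⟨t, ht, hadj⟩ := hdom j hj hjT
    exact ⟨t, ht, (show (restrict G U).Adj j t from ⟨hadj.symm, hj, hTU ht⟩).reachable⟩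
  intro j hj k hk
  obtain ⟨s, hs, hjs⟩ := reach j hj
  obtain ⟨t, ht, hkt⟩ := reach k hk
  exact hjs.trans (((hT s hs t ht).mono (restrict_mono G hTU)).trans hkt.symm)

variable [DecidableEq ι]

lemma cutnodes_subset : cutnodes G S ⊆ S := filter_subset _ _

lemma cutnodes_subset_of_connectedOn (hTS : T ⊆ S) (hT : ConnectedOn G T)
    (hdom : ∀ j ∈ S, j ∉ T → ∃ t ∈ T, G.Adj t j) : cutnodes G S ⊆ T := by
  intro i hi
  by_contra hiT
  refine (mem_filter.mp hi).2 (connectedOn_of_forall_adj (fun t ht => ?_) hT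
    fun j hj hjT => hdom j (mem_of_mem_erase hj) hjT)
  exact mem_erase.mpr ⟨fun h => hiT (h ▸ ht), hTS ht⟩

lemma subsingleton_neighborSet_of_connectedOn_erase (hG : G.IsAcyclic) {i : ι}
    (h : ConnectedOn G (S.erase i)) : ((restrict G S).neighborSet i).Subsingleton := by
  rintro j ⟨hij, -, hjS⟩ k ⟨hik, -, hkS⟩
  by_contra hjk
  have hj : j ∈ S.erase i := mem_erase.mpr ⟨hij.ne', hjS⟩
  have hk : k ∈ S.erase i := mem_erase.mpr ⟨hik.ne', hkS⟩
  obtain ⟨q, hq, hqS⟩ := exists_isPath_of_reachable_restrict (h j hj k hk) hj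
  let r : G.Walk j k := .cons hij.symm (.cons hik .nil)
  have hr : r.IsPath := by simp [r, hij.ne', hik.ne, hjk]
  have hrq : r = q := congrArg Subtype.val ((hG.subsingleton_path j k).elim ⟨r, hr⟩ ⟨q, hq⟩)
  simpa using hqS i (hrq ▸ by simp [r])

lemma connectedOn_and_forall_adj_of_cutnodes_subset (hG : G.IsAcyclic) (hS : ConnectedOn G S)
    (hTS : T ⊆ S) (hT : T.Nonempty) (hcut : cutnodes G S ⊆ T) :
    ConnectedOn G T ∧ ∀ j ∈ S, j ∉ T → ∃ t ∈ T, G.Adj t j := by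
  have hinternal : ∀ {a b x : ι} (p : (restrict G S).Walk a b), p.IsPath → a ∈ S →
      x ∈ p.support → x ≠ a → x ≠ b → x ∈ T := by
    intro a b x p hp ha hx hxa hxb
    by_contra hxT
    have hxS := mem_of_mem_support_restrict p ha x hx
    have hconn : ConnectedOn G (S.erase x) := by
      by_contra h
      exact hxT (hcut (mem_filter.mpr ⟨hxS, h⟩))
    exact (hp.neighborSet_nontrivial hx hxa hxb).not_subsingleton
      (subsingleton_neighborSet_of_connectedOn_erase hG hconn)
  constructor
  · intro j hj k hk
    obtain ⟨p, hp⟩ := (hS j (hTS hj) k (hTS hk)).exists_isPath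
    refine reachable_restrict_of_support_subset p fun x hx => ?_
    by_cases hxj : x = j
    · exact hxj ▸ hj
    by_cases hxk : x = k
    · exact hxk ▸ hk
    exact hinternal p hp (hTS hj) hx hxj hxk
  · intro j hjS hjT
    obtain ⟨t, ht⟩ := hT
    obtain ⟨p, hp⟩ := (hS j hjS t (hTS ht)).exists_isPath
    have hadj := p.adj_snd (SimpleGraph.Walk.not_nil_of_ne fun h => hjT (h ▸ ht))
    refine ⟨p.snd, ?_, hadj.1.symm⟩
    by_cases hst : p.snd = t
    · rwa [hst]
    exact hinternal p hp hjS (p.getVert_mem_support 1) hadj.ne' hst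

lemma cutnodes_subset_iff (hG : G.IsAcyclic) (hS : ConnectedOn G S) (hTS : T ⊆ S)
    (hT : T.Nonempty) :
    cutnodes G S ⊆ T ↔ ConnectedOn G T ∧ ∀ j ∈ S, j ∉ T → ∃ t ∈ T, G.Adj t j :=
  ⟨connectedOn_and_forall_adj_of_cutnodes_subset hG hS hTS hT,
    fun h => cutnodes_subset_of_connectedOn hTS h.1 h.2⟩

lemma dividend_eq_sum_sdiff (v : Finset ι → ℝ) (S : Finset ι) :
    dividend v S = ∑ R ∈ S.powerset, (-1 : ℝ) ^ #(S \ R) * v R :=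
  sum_congr rfl fun R hR => by rw [card_sdiff_of_subset (mem_powerset.mp hR)]

lemma sum_powerset_dividend_sdiff (v : Finset ι → ℝ) (hCS : C ⊆ S) :
    ∑ L ∈ C.powerset, dividend v (S \ L) =
      ∑ R ∈ S.powerset, (if C ⊆ R then (-1 : ℝ) ^ #(S \ R) else 0) * v R := by
  simp_rw [dividend_eq_sum_sdiff]
  rw [sum_comm' (t' := S.powerset) (s' := fun R => (C \ R).powerset) fun L R => ?_]
  · refine sum_congr rfl fun R _ => ?_
    have hsign : ∀ L ∈ (C \ R).powerset,
        (-1 : ℝ) ^ #((S \ L) \ R) * v R = (-1) ^ #(S \ R) * v R * (-1) ^ #L := by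
      intro L hL
      have hLSR : L ⊆ S \ R := (mem_powerset.mp hL).trans (sdiff_subset_sdiff hCS subset_rfl)
      rw [sdiff_right_comm, neg_one_pow_card_sdiff hLSR]
      ring
    rw [sum_congr rfl hsign, ← mul_sum, sum_powerset_neg_one_pow_card_eq_ite]
    simp only [sdiff_eq_empty_iff_subset, mul_ite, ite_mul, mul_one, mul_zero, zero_mul]
  · simp only [mem_powerset, subset_sdiff, disjoint_comm (a := L)]
    tauto

variable [Fintype ι]

lemma mem_image_comp_iff :
    T ∈ S.image (comp G S) ↔
      T.Nonempty ∧ ConnectedOn G T ∧ T ⊆ S ∧ ∀ t ∈ T, ∀ j ∈ S, G.Adj t j → j ∈ T := by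
  constructor
  · intro hT
    obtain ⟨i, hiS, rfl⟩ := mem_image.mp hT
    refine ⟨⟨i, mem_filter.mpr ⟨hiS, .rfl⟩⟩, ?_, filter_subset _ _, ?_⟩
    · intro j hj k hk
      obtain ⟨hjS, hij⟩ := mem_filter.mp hj
      obtain ⟨w⟩ := hij.symm.trans (mem_filter.mp hk).2
      refine reachable_restrict_of_support_subset w fun x hx => mem_filter.mpr
        ⟨mem_of_mem_support_restrict w hjS x hx, hij.trans (w.takeUntil x hx).reachable⟩
    · intro t ht j hjS hadj
      obtain ⟨htS, hit⟩ := mem_filter.mp ht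
      exact mem_filter.mpr ⟨hjS, hit.trans (SimpleGraph.Adj.reachable ⟨hadj, htS, hjS⟩)⟩
  · rintro ⟨⟨i, hiT⟩, hT, hTS, hclosed⟩
    refine mem_image.mpr ⟨i, hTS hiT, ?_⟩
    have stays : ∀ {a b : ι} (p : (restrict G S).Walk a b), a ∈ T → b ∈ T := by
      intro a b p
      induction p with
      | nil => exact id
      | cons h q ih => exact fun ha => ih (hclosed _ ha _ h.2.2 h.1)
    ext j
    simp only [comp, mem_filter]
    exact ⟨fun ⟨_, ⟨w⟩⟩ => stays w hiT,
      fun hj => ⟨hTS hj, (hT i hiT j hj).mono (restrict_mono G hTS)⟩⟩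

lemma dividend_restrictedGame (v : Finset ι → ℝ) (S : Finset ι) :
    dividend (restrictedGame G v) S = ∑ T ∈ S.powerset,
      (∑ R ∈ {R ∈ S.powerset | T ∈ R.image (comp G R)}, (-1 : ℝ) ^ #(S \ R)) * v T := by
  simp_rw [dividend_eq_sum_sdiff, sum_mul, sum_filter]
  rw [sum_comm]
  refine sum_congr rfl fun R hR => ?_
  rw [restrictedGame, mul_sum, sum_ite_mem, inter_eq_right.mpr]
  intro T hT
  obtain ⟨i, -, rfl⟩ := mem_image.mp hT
  exact mem_powerset.mpr ((filter_subset _ _).trans (mem_powerset.mp hR))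

lemma sum_neg_one_pow_of_mem_image_comp (hTS : T ⊆ S) :
    ∑ R ∈ {R ∈ S.powerset | T ∈ R.image (comp G R)}, (-1 : ℝ) ^ #(S \ R) =
      if T.Nonempty ∧ ConnectedOn G T ∧ ∀ j ∈ S, j ∉ T → ∃ t ∈ T, G.Adj t j
      then (-1) ^ #(S \ T) else 0 := by
  by_cases hT : T.Nonempty ∧ ConnectedOn G T
  swap
  · rw [if_neg (by tauto)]
    exact sum_eq_zero fun R hR => absurd (mem_image_comp_iff.mp (mem_filter.mp hR).2) (by tauto)
  set B := (S \ T).filter fun j => ∃ t ∈ T, G.Adj t j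
  have hfilter : {R ∈ S.powerset | T ∈ R.image (comp G R)} = {R ∈ (S \ B).powerset | T ⊆ R} := by
    ext R
    simp only [mem_filter, mem_powerset, mem_image_comp_iff, hT, true_and, subset_sdiff,
      disjoint_left, B, mem_sdiff]
    constructor
    · rintro ⟨hRS, hTR, hclosed⟩
      exact ⟨⟨hRS, fun j hjR ⟨⟨_, hjT⟩, t, ht, hadj⟩ => hjT (hclosed t ht j hjR hadj)⟩, hTR⟩
    · rintro ⟨⟨hRS, hdisj⟩, hTR⟩
      exact ⟨hRS, hTR, fun t ht j hjR hadj =>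
        by_contra fun hjT => hdisj hjR ⟨⟨hRS hjR, hjT⟩, t, ht, hadj⟩⟩
  have hTB : T ⊆ S \ B := fun t ht =>
    mem_sdiff.mpr ⟨hTS ht, fun h => (mem_sdiff.mp (mem_filter.mp h).1).2 ht⟩
  have hdom : T = S \ B ↔ ∀ j ∈ S, j ∉ T → ∃ t ∈ T, G.Adj t j := by
    constructor
    · intro h j hjS hjT
      have hjB : j ∈ B := by_contra fun hjB => hjT (h ▸ mem_sdiff.mpr ⟨hjS, hjB⟩)
      exact (mem_filter.mp hjB).2
    · intro h
      refine Subset.antisymm hTB fun j hj => by_contra fun hjT => ?_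
      obtain ⟨hjS, hjB⟩ := mem_sdiff.mp hj
      exact hjB (mem_filter.mpr ⟨mem_sdiff.mpr ⟨hjS, hjT⟩, h j hjS hjT⟩)
  rw [hfilter, sum_superset_neg_one_pow_card_sdiff hTB sdiff_subset, if_congr hdom rfl rfl]
  simp only [hT, true_and]
  split_ifs with h
  · rw [hdom.mpr h]
  · rfl

end TUGame

/-- for a tree, the dividends of the graph-restricted game of a
connected coalition `S` are sums of dividends of `v` over subsets of cutnodes
removed from `S`. -/
theorem dividend_restrictedGame_tree {ι : Type*} [Fintype ι] [DecidableEq ι]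
    (G : SimpleGraph ι) (hG : G.IsTree) (v : Finset ι → ℝ) (hv : v ∅ = 0)
    (S : Finset ι) (hS : ConnectedOn G S) :
    dividend (restrictedGame G v) S =
      ∑ L ∈ (cutnodes G S).powerset, dividend v (S \ L) := by
  rw [dividend_restrictedGame, sum_powerset_dividend_sdiff v cutnodes_subset]
  refine sum_congr rfl fun T hT => ?_
  rw [sum_neg_one_pow_of_mem_image_comp (mem_powerset.mp hT)]
  obtain rfl | hTne := T.eq_empty_or_nonempty
  · simp [hv]
  · simp only [cutnodes_subset_iff hG.isAcyclic hS (mem_powerset.mp hT) hTne, hTne, true_and]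
end
end

section
/- The Shapley interaction index satisfies the dummy/null property for coalitions: if i is a null player in game w, then SI^w(S ∪ {i}) = 0 for all nonempty S ⊆ N∖{i}. -/
open Finset

noncomputable section
open scoped Classical

open TUGame

/-! The summand of `SIderiv v S` at `T` is the discrete derivative of `v` at `T` in the
directions `S`. Adding a direction `i` differences it along `i`, which kills it when `i` is
a null player. -/

namespace TUGame

variable {ι : Type*} [DecidableEq ι]

def discreteDeriv (v : Finset ι → ℝ) (S T : Finset ι) : ℝ :=
  ∑ L ∈ S.powerset, (-1 : ℝ) ^ (S.card - L.card) * v (T ∪ L)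

theorem discreteDeriv_insert (v : Finset ι → ℝ) {i : ι} {S : Finset ι} (hiS : i ∉ S)
    (T : Finset ι) :
    discreteDeriv v (insert i S) T = discreteDeriv v S (insert i T) - discreteDeriv v S T := by
  rw [discreteDeriv, sum_powerset_insert hiS, sub_eq_add_neg, add_comm, discreteDeriv,
    discreteDeriv, ← sum_neg_distrib]
  congr 1
  · refine sum_congr rfl fun L hL => ?_
    have hiL : i ∉ L := fun hi => hiS (mem_powerset.1 hL hi)
    rw [card_insert_of_notMem hiS, card_insert_of_notMem hiL, Nat.add_sub_add_right,
      union_insert, insert_union]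
  · refine sum_congr rfl fun L hL => ?_
    have hLS : L.card ≤ S.card := card_le_card (mem_powerset.1 hL)
    rw [card_insert_of_notMem hiS, Nat.sub_add_comm hLS, pow_succ]
    ring

theorem NullPlayer.apply_insert {v : Finset ι → ℝ} {i : ι} (h : NullPlayer v i)
    (X : Finset ι) : v (insert i X) = v X := by
  by_cases hiX : i ∈ X
  · rw [insert_eq_of_mem hiX]
  · exact h X hiX

theorem NullPlayer.discreteDeriv_insert_eq_zero {v : Finset ι → ℝ} {i : ι}
    (h : NullPlayer v i) {S : Finset ι} (hiS : i ∉ S) (T : Finset ι) :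
    discreteDeriv v (insert i S) T = 0 := by
  rw [discreteDeriv_insert v hiS, sub_eq_zero]
  refine sum_congr rfl fun L _ => ?_
  rw [insert_union, h.apply_insert]

end TUGame

theorem SI_null_player_general {ι : Type*} [Fintype ι] [DecidableEq ι]
    (w : Finset ι → ℝ) (i : ι) (h : NullPlayer w i)
    (S : Finset ι) (hiS : i ∉ S) :
    SIderiv w (insert i S) = 0 :=
  sum_eq_zero fun T _ => by
    rw [← discreteDeriv, h.discreteDeriv_insert_eq_zero hiS, mul_zero]

/-- the Shapley interaction index vanishes on coalitions
containing a null player (together with at least one other player). -/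
theorem SI_null_player {ι : Type*} [Fintype ι] [DecidableEq ι]
    (w : Finset ι → ℝ) (i : ι) (h : NullPlayer w i)
    (S : Finset ι) (hS : S.Nonempty) (hiS : i ∉ S) :
    SIderiv w (insert i S) = 0 :=
  SI_null_player_general w i h S hiS
end
end

section
/- The Myerson interaction index satisfies fairness: for any game v, graph Γ = (N,E), edge {i,j} ∈ E, and S ⊆ N∖{i,j}, MI^{v,Γ}(S ∪ {i}) − MI^{v,Γ_{−{i,j}}}(S ∪ {i}) = MI^{v,Γ}(S ∪ {j}) − MI^{v,Γ_{−{i,j}}}(S ∪ {j}), where Γ_{−{i,j}} is Γ with edge {i,j} removed. -/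
open Finset

noncomputable section
open scoped Classical

open TUGame

/-! The dividend of the restricted game at `T` depends only on the subgraph induced on `T`, so
deleting the edge `{i, j}` changes only the dividends of coalitions `T ⊇ {i, j}`. Both sides of
fairness are therefore the same sum of these changes over `T ⊇ S ∪ {i, j}`, with the same
weights `1 / (|T| - |S|)`. -/

namespace TUGame

variable {ι : Type*}

theorem dividend_congr {v w : Finset ι → ℝ} {T : Finset ι} (h : ∀ R ⊆ T, v R = w R) :
    dividend v T = dividend w T :=
  sum_congr rfl fun R hR => by rw [h R (mem_powerset.mp hR)]

theorem SIdiv_sub_SIdiv [Fintype ι] [DecidableEq ι] {v w : Finset ι → ℝ} (P : Finset ι)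
    (h : ∀ R, ¬ P ⊆ R → v R = w R) (A : Finset ι) :
    SIdiv v A - SIdiv w A =
      ∑ T ∈ univ.powerset.filter (fun T => A ∪ P ⊆ T),
        (dividend v T - dividend w T) / ((T.card - A.card + 1 : ℕ) : ℝ) := by
  rw [SIdiv, SIdiv, ← sum_sub_distrib]
  simp_rw [← sub_div]
  refine (sum_subset (fun T hT => ?_) fun T hT hT' => ?_).symm
  · simp only [mem_filter, union_subset_iff] at hT ⊢
    exact ⟨hT.1, hT.2.1⟩
  · simp only [mem_filter, union_subset_iff, not_and] at hT hT'
    have hPT : ¬ P ⊆ T := hT' hT.1 hT.2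
    rw [dividend_congr fun R hR => h R fun hPR => hPT (hPR.trans hR), sub_self, zero_div]

theorem restrictedGame_congr [Fintype ι] [DecidableEq ι] {G H : SimpleGraph ι}
    (v : Finset ι → ℝ) {R : Finset ι} (h : restrict G R = restrict H R) :
    restrictedGame G v R = restrictedGame H v R := by
  unfold restrictedGame comp
  rw [h]

theorem restrict_deleteEdges_of_not_subset [DecidableEq ι] (G : SimpleGraph ι) {i j : ι}
    {R : Finset ι} (h : ¬ {i, j} ⊆ R) :
    restrict (G.deleteEdges {s(i, j)}) R = restrict G R := by
  ext a b
  simp only [restrict, SimpleGraph.deleteEdges_adj, Set.mem_singleton_iff]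
  refine ⟨fun ⟨⟨hab, _⟩, ha, hb⟩ => ⟨hab, ha, hb⟩,
    fun ⟨hab, ha, hb⟩ => ⟨⟨hab, fun he => ?_⟩, ha, hb⟩⟩
  rcases Sym2.eq_iff.mp he with ⟨rfl, rfl⟩ | ⟨rfl, rfl⟩ <;> simp_all [insert_subset_iff]

theorem MI_sub_MI_deleteEdges [Fintype ι] [DecidableEq ι] (G : SimpleGraph ι)
    (v : Finset ι → ℝ) (i j : ι) (A : Finset ι) :
    MI G v A - MI (G.deleteEdges {s(i, j)}) v A =
      ∑ T ∈ univ.powerset.filter (fun T => A ∪ {i, j} ⊆ T),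
        (dividend (restrictedGame G v) T - dividend (restrictedGame (G.deleteEdges {s(i, j)}) v) T)
          / ((T.card - A.card + 1 : ℕ) : ℝ) :=
  SIdiv_sub_SIdiv {i, j}
    (fun _ hR => restrictedGame_congr v (restrict_deleteEdges_of_not_subset G hR).symm) A

end TUGame

theorem MI_fairness_general {ι : Type*} [Fintype ι] [DecidableEq ι]
    (G : SimpleGraph ι) (v : Finset ι → ℝ) (i j : ι)
    (S : Finset ι) (hi : i ∉ S) (hj : j ∉ S) :
    MI G v (insert i S) - MI (G.deleteEdges {s(i, j)}) v (insert i S) =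
      MI G v (insert j S) - MI (G.deleteEdges {s(i, j)}) v (insert j S) := by
  have hunion : insert i S ∪ {i, j} = insert j S ∪ {i, j} := by
    ext x
    simp only [mem_union, mem_insert, mem_singleton]
    tauto
  have hcard : (insert i S).card = (insert j S).card := by
    rw [card_insert_of_notMem hi, card_insert_of_notMem hj]
  rw [MI_sub_MI_deleteEdges, MI_sub_MI_deleteEdges, hunion, hcard]

/-- the Myerson interaction index satisfies fairness. -/
theorem MI_fairness {ι : Type*} [Fintype ι] [DecidableEq ι]
    (G : SimpleGraph ι) (v : Finset ι → ℝ) (i j : ι) (hij : G.Adj i j)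
    (S : Finset ι) (hi : i ∉ S) (hj : j ∉ S) :
    MI G v (insert i S) - MI (G.deleteEdges {s(i, j)}) v (insert i S) =
      MI G v (insert j S) - MI (G.deleteEdges {s(i, j)}) v (insert j S) :=
  MI_fairness_general G v i j S hi hj
end
end

section
/- If P is a partnership in game w (i.e., w(T ∪ S) = w(T) for all T ⊆ N∖P and all S ⊊ P), then the Harsanyi dividends satisfy Δ_w(L ∪ P) = Δ_{w_{[P]}}(L ∪ {[P]}) for every L ⊆ N∖P, where w_{[P]} is the quotient game replacing P by a single proxy player [P]. -/
open Finset

noncomputable section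
open scoped Classical

open TUGame

/-!
Over a disjoint union `L ∪ P` the dividend factors as an alternating sum, over `A ⊆ L`, of
the dividends of `P` in the games `B ↦ w (A ∪ B)`. When `P` is a partnership these games are
constant on the proper subsets of `P`, so each such dividend collapses to `w (A ∪ P) - w A`;
and this is exactly the dividend of the singleton `{p}` in the corresponding quotient game.
-/

theorem Finset.sum_powerset_union_of_disjoint {α M : Type*} [DecidableEq α]
    [AddCommMonoid M] {s t : Finset α} (h : Disjoint s t) (f : Finset α → M) :
    ∑ u ∈ (s ∪ t).powerset, f u = ∑ a ∈ s.powerset, ∑ b ∈ t.powerset, f (a ∪ b) := by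
  have hsplit : ∀ u ∈ (s ∪ t).powerset, u ∩ s ∪ u ∩ t = u := fun u hu => by
    rw [← inter_union_distrib_left, inter_eq_left.mpr (mem_powerset.mp hu)]
  rw [← sum_product']
  refine sum_nbij' (fun u => (u ∩ s, u ∩ t)) (fun x => x.1 ∪ x.2) ?_ ?_ hsplit ?_ ?_
  · intro u _
    simp [inter_subset_right]
  · rintro ⟨a, b⟩ hab
    simp only [mem_product, mem_powerset] at hab ⊢
    exact union_subset_union hab.1 hab.2
  · rintro ⟨a, b⟩ hab
    simp only [mem_product, mem_powerset] at hab
    have hat : a ∩ t = ∅ := disjoint_iff_inter_eq_empty.mp (h.mono_left hab.1)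
    have hbs : b ∩ s = ∅ := disjoint_iff_inter_eq_empty.mp (h.symm.mono_left hab.2)
    simp only [union_inter_distrib_right, inter_eq_left.mpr hab.1,
      inter_eq_left.mpr hab.2, hat, hbs, union_empty, empty_union]
  · intro u hu
    rw [hsplit u hu]

theorem Finset.sum_powerset_neg_one_pow_card_sub_card {α R : Type*} [CommRing R]
    {s : Finset α} (hs : s.Nonempty) :
    ∑ t ∈ s.powerset, (-1 : R) ^ (s.card - t.card) = 0 := by
  simpa [zero_pow hs.card_pos.ne'] using sum_pow_mul_eq_add_pow (1 : R) (-1) s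

namespace TUGame

theorem dividend_union_of_disjoint {ι : Type*} [DecidableEq ι] (v : Finset ι → ℝ)
    {L P : Finset ι} (h : Disjoint L P) :
    dividend v (L ∪ P) =
      ∑ A ∈ L.powerset, (-1 : ℝ) ^ (L.card - A.card) * dividend (fun B => v (A ∪ B)) P := by
  simp only [dividend, sum_powerset_union_of_disjoint h, mul_sum]
  refine sum_congr rfl fun A hA => sum_congr rfl fun B hB => ?_
  have hAL := card_le_card (mem_powerset.mp hA)
  have hBP := card_le_card (mem_powerset.mp hB)
  have hAB : Disjoint A B := h.mono (mem_powerset.mp hA) (mem_powerset.mp hB)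
  rw [card_union_of_disjoint h, card_union_of_disjoint hAB,
    show L.card + P.card - (A.card + B.card) = (L.card - A.card) + (P.card - B.card) by omega,
    pow_add, mul_assoc]

theorem dividend_eq_sub_of_forall_ssubset {ι : Type*} (v : Finset ι → ℝ) {P : Finset ι}
    (hP : P.Nonempty) (hv : ∀ S ⊂ P, v S = v ∅) : dividend v P = v P - v ∅ := by
  have hdiff :
      ∑ R ∈ P.powerset, (-1 : ℝ) ^ (P.card - R.card) * (v R - v ∅) = v P - v ∅ := by
    rw [sum_eq_single_of_mem P (mem_powerset_self P)]
    · simp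
    · intro R hR hRP
      rw [hv R ((mem_powerset.mp hR).ssubset_of_ne hRP), sub_self, mul_zero]
  calc dividend v P
      = ∑ R ∈ P.powerset, (-1 : ℝ) ^ (P.card - R.card) * (v R - v ∅)
          + (∑ R ∈ P.powerset, (-1 : ℝ) ^ (P.card - R.card)) * v ∅ := by
        rw [dividend, sum_mul, ← sum_add_distrib]
        exact sum_congr rfl fun _ _ => by ring
    _ = v P - v ∅ := by
        rw [hdiff, sum_powerset_neg_one_pow_card_sub_card hP, zero_mul, add_zero]

theorem dividend_singleton {ι : Type*} (v : Finset ι → ℝ) (p : ι) :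
    dividend v {p} = v {p} - v ∅ :=
  dividend_eq_sub_of_forall_ssubset v (singleton_nonempty p)
    fun _ hS => by rw [ssubset_singleton_iff.mp hS]

end TUGame

/-- for a partnership `P`, the dividends of coalitions containing
`P` equal the dividends in the quotient game where `P` is replaced by the proxy
player `p ∈ P`. -/
theorem dividend_partnership_quotient {ι : Type*} [Fintype ι] [DecidableEq ι]
    (w : Finset ι → ℝ) (P : Finset ι) (hPne : P.Nonempty)
    (hP : ∀ T ⊆ Finset.univ \ P, ∀ S ⊂ P, w (T ∪ S) = w T)
    (p : ι) (hp : p ∈ P) (L : Finset ι) (hL : L ⊆ Finset.univ \ P) :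
    dividend w (L ∪ P) =
      dividend (fun S => if p ∈ S then w (S.erase p ∪ P) else w S) (insert p L) := by
  have hLP : Disjoint L P := (subset_sdiff.mp hL).2
  have hpL : p ∉ L := fun h => disjoint_left.mp hLP h hp
  rw [insert_eq, union_comm {p} L, dividend_union_of_disjoint _ hLP,
    dividend_union_of_disjoint _ (disjoint_singleton_right.mpr hpL)]
  refine sum_congr rfl fun A hA => ?_
  have hAL : A ⊆ L := mem_powerset.mp hA
  have hpA : p ∉ A := fun h => hpL (hAL h)
  have hpartner : dividend (fun B => w (A ∪ B)) P = w (A ∪ P) - w A := by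
    refine (dividend_eq_sub_of_forall_ssubset _ hPne fun S hS => ?_).trans (by rw [union_empty])
    rw [union_empty, hP A (hAL.trans hL) S hS]
  rw [hpartner, dividend_singleton]
  simp [hpA]
end
end
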